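/- arXiv:2412.10088 — 4 statements merged into one kernel-verified Lean document; each statement's English description precedes it below -/
import Mathlib

section
/- Let Υ solve ΥA + RC = QΥ, let x(t) = e^{At} B e_j (the impulse response with input direction e_j starting from x(0⁻)=0), and let ϖ solve ϖ̇ = Qϖ + RCx with ϖ(0) = 0, x(0) = B e_j. Then ϖ(t) + Υx(t) = e^{Qt} Υ B e_j for all t ≥ 0. -/
open Matrix

/-!
Since `ΥA + RC = QΥ`, the sum `z = ϖ + Υx` solves the homogeneous equation `ż = Qz`, with
`z(0) = ΥBe_j`. Solutions of `ż = Qz` are `e^{tQ} z(0)`, because `e^{-tQ} z(t)` has zero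
derivative.
-/

theorem Matrix.exp_mul_exp_neg {ι 𝔸 : Type*} [Fintype ι] [DecidableEq ι] [NormedRing 𝔸]
    [NormedAlgebra ℚ 𝔸] [CompleteSpace 𝔸] (A : Matrix ι ι 𝔸) :
    NormedSpace.exp A * NormedSpace.exp (-A) = 1 := by
  rw [← exp_add_of_commute _ _ (Commute.refl A).neg_right, add_neg_cancel, NormedSpace.exp_zero]

section

-- Derivatives of matrix-valued maps need a norm on matrices; any one gives the same derivatives.
attribute [local instance] Matrix.linftyOpNormedAddCommGroup Matrix.linftyOpNormedSpace
  Matrix.linftyOpNormedRing Matrix.linftyOpNormedAlgebra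

variable {𝕂 : Type*} [RCLike 𝕂] {ι κ : Type*} [Fintype ι] [Fintype κ]

theorem HasDerivAt.matrix_mulVec {M : 𝕂 → Matrix κ ι 𝕂} {M' : Matrix κ ι 𝕂} {v : 𝕂 → ι → 𝕂}
    {v' : ι → 𝕂} {t : 𝕂} (hM : HasDerivAt M M' t) (hv : HasDerivAt v v' t) :
    HasDerivAt (fun s => M s *ᵥ v s) (M' *ᵥ v t + M t *ᵥ v') t := by
  rw [add_comm]
  exact (mulVecBilin 𝕂 𝕂 : Matrix κ ι 𝕂 →ₗ[𝕂] _).toContinuousBilinearMap.hasDerivAt_of_bilinear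
    (fun _ => hM) (fun _ => hv)

theorem HasDerivAt.const_mulVec (M : Matrix κ ι 𝕂) {v : 𝕂 → ι → 𝕂} {v' : ι → 𝕂} {t : 𝕂}
    (hv : HasDerivAt v v' t) : HasDerivAt (fun s => M *ᵥ v s) (M *ᵥ v') t := by
  simpa using (hasDerivAt_const t M).matrix_mulVec hv

variable [DecidableEq ι]

-- Restated so that `exp` and `*` carry the global matrix instances, which later rewrites match.
theorem Matrix.hasDerivAt_exp_smul_const' (A : Matrix ι ι 𝕂) (t : 𝕂) :
    HasDerivAt (fun s => NormedSpace.exp (s • A)) (A * NormedSpace.exp (t • A)) t :=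
  _root_.hasDerivAt_exp_smul_const' A t

theorem Matrix.hasDerivAt_exp_smul_mulVec (A : Matrix ι ι 𝕂) (v : ι → 𝕂) (t : 𝕂) :
    HasDerivAt (fun s => NormedSpace.exp (s • A) *ᵥ v)
      (A *ᵥ (NormedSpace.exp (t • A) *ᵥ v)) t := by
  simpa [mulVec_mulVec] using (hasDerivAt_exp_smul_const' A t).matrix_mulVec (hasDerivAt_const t v)

theorem Matrix.eq_exp_smul_mulVec_of_hasDerivAt {Q : Matrix ι ι 𝕂} {z : 𝕂 → ι → 𝕂}
    (hz : ∀ s, HasDerivAt z (Q *ᵥ z s) s) (t : 𝕂) :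
    z t = NormedSpace.exp (t • Q) *ᵥ z 0 := by
  have hw (s : 𝕂) : HasDerivAt (fun s => NormedSpace.exp (s • -Q) *ᵥ z s) 0 s := by
    have := (hasDerivAt_exp_smul_const' (-Q) s).matrix_mulVec (hz s)
    rwa [mulVec_mulVec, ← add_mulVec, ((Commute.refl Q).neg_left.smul_left s).exp_left.eq,
      neg_mul, neg_add_cancel, zero_mulVec] at this
  have hconst := is_const_of_deriv_eq_zero (fun s => (hw s).differentiableAt)
    (fun s => (hw s).deriv) t 0
  simp only [zero_smul, NormedSpace.exp_zero, one_mulVec] at hconst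
  rw [← hconst, mulVec_mulVec, smul_neg, exp_mul_exp_neg, one_mulVec]

end

/-- Impulse response through the swapped filter: with `x(t) = e^{At} B e_j` and
`ϖ(0) = 0`, one has `ϖ(t) + Υx(t) = e^{Qt} Υ B e_j` for all `t ≥ 0`. -/
theorem swapped_impulse_response {n ν m p : ℕ}
    (A : Matrix (Fin n) (Fin n) ℝ) (B : Matrix (Fin n) (Fin m) ℝ)
    (C : Matrix (Fin p) (Fin n) ℝ)
    (Q : Matrix (Fin ν) (Fin ν) ℝ) (R : Matrix (Fin ν) (Fin p) ℝ)
    (U : Matrix (Fin ν) (Fin n) ℝ) (hU : U * A + R * C = Q * U)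
    (j : Fin m)
    (x : ℝ → Fin n → ℝ) (ϖ : ℝ → Fin ν → ℝ)
    (hx : ∀ t, x t = NormedSpace.exp (t • A) *ᵥ (B *ᵥ Pi.single j 1))
    (hϖ : ∀ t, HasDerivAt ϖ (Q *ᵥ ϖ t + R *ᵥ (C *ᵥ x t)) t)
    (hϖ0 : ϖ 0 = 0) :
    ∀ t : ℝ, 0 ≤ t →
      ϖ t + U *ᵥ x t = NormedSpace.exp (t • Q) *ᵥ (U *ᵥ (B *ᵥ Pi.single j 1)) := by
  intro t _
  have hxd (s : ℝ) : HasDerivAt x (A *ᵥ x s) s := by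
    rw [funext hx]
    exact hasDerivAt_exp_smul_mulVec A _ s
  have hz (s : ℝ) : HasDerivAt (fun s => ϖ s + U *ᵥ x s) (Q *ᵥ (ϖ s + U *ᵥ x s)) s := by
    refine ((hϖ s).add ((hxd s).const_mulVec U)).congr_deriv ?_
    rw [mulVec_add, mulVec_mulVec, mulVec_mulVec, mulVec_mulVec, ← hU, add_mulVec]
    abel
  simpa [hϖ0, hx 0] using eq_exp_smul_mulVec_of_hasDerivAt hz t
end

section
/- Left-interpolation analogue: if Υ solves ΥA + RC = QΥ, q₀ ∈ ℂ is an eigenvalue of Qᵀ with left eigenvector w (wᵀQ = q₀wᵀ), and q₀ ∉ σ(A), then wᵀ R C (q₀ I − A)^{-1} B = wᵀ Υ B. -/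
/-!
Multiplying the Sylvester equation `UA + RC = QU` on the left by the left eigenvector `w` of `Q`
turns it into `wᵀRC = wᵀU(q₀I − A)`; multiplying this on the right by `(q₀I − A)⁻¹B` gives the
moment identity.
-/

open Matrix

namespace Matrix

variable {K : Type*} [CommRing K] {ι κ o : Type*} [Fintype ι] [Fintype κ] [Fintype o]
  [DecidableEq κ]

theorem vecMul_mul_eq_vecMul_mul_smul_one_sub_of_sylvester {A : Matrix κ κ K}
    {C : Matrix o κ K} {Q : Matrix ι ι K} {R : Matrix ι o K} {U : Matrix ι κ K}
    (hU : U * A + R * C = Q * U) {q : K} {w : ι → K} (hwQ : w ᵥ* Q = q • w) :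
    w ᵥ* (R * C) = w ᵥ* (U * (q • 1 - A)) := by
  calc w ᵥ* (R * C) = w ᵥ* (Q * U) - w ᵥ* (U * A) := by
        rw [← hU, vecMul_add, add_sub_cancel_left]
    _ = w ᵥ* (U * (q • 1 - A)) := by
        rw [← vecMul_vecMul, hwQ, Matrix.mul_sub, Matrix.mul_smul, Matrix.mul_one, vecMul_sub,
          smul_vecMul, vecMul_smul]

theorem isUnit_det_smul_one_sub_of_notMem_spectrum {A : Matrix κ κ K} {q : K}
    (hq : q ∉ spectrum K A) : IsUnit (q • 1 - A).det := by
  rw [spectrum.notMem_iff, Algebra.algebraMap_eq_smul_one] at hq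
  exact (isUnit_iff_isUnit_det _).mp hq

end Matrix

theorem left_moment_matching_general {n ν m p : ℕ}
    (A : Matrix (Fin n) (Fin n) ℂ) (B : Matrix (Fin n) (Fin m) ℂ)
    (C : Matrix (Fin p) (Fin n) ℂ) (Q : Matrix (Fin ν) (Fin ν) ℂ)
    (R : Matrix (Fin ν) (Fin p) ℂ)
    (U : Matrix (Fin ν) (Fin n) ℂ) (hU : U * A + R * C = Q * U)
    (q₀ : ℂ) (hq : q₀ ∉ spectrum ℂ A)
    (w : Fin ν → ℂ) (hwQ : w ᵥ* Q = q₀ • w) :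
    w ᵥ* (R * C * (q₀ • (1 : Matrix (Fin n) (Fin n) ℂ) - A)⁻¹ * B) = w ᵥ* (U * B) := by
  calc w ᵥ* (R * C * (q₀ • 1 - A)⁻¹ * B) = w ᵥ* (R * C) ᵥ* ((q₀ • 1 - A)⁻¹ * B) := by
        rw [vecMul_vecMul, Matrix.mul_assoc]
    _ = w ᵥ* (U * ((q₀ • 1 - A) * ((q₀ • 1 - A)⁻¹ * B))) := by
        rw [vecMul_mul_eq_vecMul_mul_smul_one_sub_of_sylvester hU hwQ, vecMul_vecMul,
          Matrix.mul_assoc]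
    _ = w ᵥ* (U * B) := by
        rw [mul_nonsing_inv_cancel_left _ _ (isUnit_det_smul_one_sub_of_notMem_spectrum hq)]

/-- Left moment matching: if `Υ` solves `ΥA + RC = QΥ`, `wᵀQ = q₀wᵀ` with
`q₀ ∉ σ(A)`, then `wᵀRC(q₀I − A)⁻¹B = wᵀΥB`. -/
theorem left_moment_matching {n ν m p : ℕ}
    (A : Matrix (Fin n) (Fin n) ℂ) (B : Matrix (Fin n) (Fin m) ℂ)
    (C : Matrix (Fin p) (Fin n) ℂ) (Q : Matrix (Fin ν) (Fin ν) ℂ)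
    (R : Matrix (Fin ν) (Fin p) ℂ)
    (U : Matrix (Fin ν) (Fin n) ℂ) (hU : U * A + R * C = Q * U)
    (q₀ : ℂ) (hq : q₀ ∉ spectrum ℂ A)
    (w : Fin ν → ℂ) (hw : w ≠ 0) (hwQ : w ᵥ* Q = q₀ • w) :
    w ᵥ* (R * C * (q₀ • (1 : Matrix (Fin n) (Fin n) ℂ) - A)⁻¹ * B) = w ᵥ* (U * B) :=
  left_moment_matching_general A B C Q R U hU q₀ hq w hwQ
end

section
/- Two-sided reduced model matches right interpolation data: assume Π solves AΠ + BL = ΠS, Υ solves ΥA + RC = QΥ, and ΥΠ is invertible. Set G = (ΥΠ)^{-1}ΥB, F = S − GL, and let s₀ be an eigenvalue of S with Sv = s₀v and s₀ ∉ σ(A) ∪ σ(F). Define the reduced transfer map Ŵ(s) = CΠ(sI − F)^{-1}G. Then Ŵ(s₀)Lv = C(s₀I − A)^{-1}BLv. -/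
open Matrix

/-!
Whenever `X` solves the Sylvester equation `A X + M = X S` and `S v = s₀ v`, the vector `X v`
solves `(s₀I − A) X v = M v`, so `(s₀I − A)⁻¹ M v = X v`. Applied to `Π` this gives
`(s₀I − A)⁻¹ B L v = Π v`; applied to the identity, which solves `F I + G L = I S` because
`F = S − G L`, it gives `(s₀I − F)⁻¹ G L v = v`. Both sides of the claim are therefore `C Π v`.
-/

namespace Matrix

variable {ι κ R : Type*} [Fintype ι] [DecidableEq ι] [Fintype κ] [CommRing R]

theorem isUnit_smul_one_sub_of_notMem_spectrum {A : Matrix ι ι R} {s : R}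
    (hs : s ∉ spectrum R A) : IsUnit (s • (1 : Matrix ι ι R) - A) := by
  rw [← Algebra.algebraMap_eq_smul_one]
  exact spectrum.notMem_iff.mp hs

theorem sub_mulVec_of_sylvester {A : Matrix ι ι R} {M : Matrix ι κ R} {X : Matrix ι κ R}
    {S : Matrix κ κ R} (hX : A * X + M = X * S) {s : R} {v : κ → R} (hSv : S *ᵥ v = s • v) :
    (s • (1 : Matrix ι ι R) - A) *ᵥ (X *ᵥ v) = M *ᵥ v := by
  have hXS : (A * X + M) *ᵥ v = s • (X *ᵥ v) := by
    rw [hX, ← mulVec_mulVec, hSv, mulVec_smul]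
  rw [add_mulVec, ← mulVec_mulVec] at hXS
  rw [sub_mulVec, smul_mulVec, one_mulVec, ← hXS]
  abel

theorem inv_smul_one_sub_mulVec_of_sylvester {A : Matrix ι ι R} {M : Matrix ι κ R}
    {X : Matrix ι κ R} {S : Matrix κ κ R} (hX : A * X + M = X * S) {s : R} {v : κ → R}
    (hSv : S *ᵥ v = s • v) (hs : s ∉ spectrum R A) :
    (s • (1 : Matrix ι ι R) - A)⁻¹ *ᵥ (M *ᵥ v) = X *ᵥ v := by
  have hdet := (isUnit_iff_isUnit_det _).mp (isUnit_smul_one_sub_of_notMem_spectrum hs)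
  rw [← sub_mulVec_of_sylvester hX hSv, mulVec_mulVec, nonsing_inv_mul _ hdet, one_mulVec]

end Matrix

theorem twosided_right_matching_general {n ν m p : ℕ}
    (A : Matrix (Fin n) (Fin n) ℂ) (B : Matrix (Fin n) (Fin m) ℂ)
    (C : Matrix (Fin p) (Fin n) ℂ) (S : Matrix (Fin ν) (Fin ν) ℂ)
    (L : Matrix (Fin m) (Fin ν) ℂ)
    (P : Matrix (Fin n) (Fin ν) ℂ)
    (hP : A * P + B * L = P * S)
    (G : Matrix (Fin ν) (Fin m) ℂ)
    (F : Matrix (Fin ν) (Fin ν) ℂ) (hF : F = S - G * L)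
    (s₀ : ℂ) (hsA : s₀ ∉ spectrum ℂ A) (hsF : s₀ ∉ spectrum ℂ F)
    (v : Fin ν → ℂ) (hSv : S *ᵥ v = s₀ • v) :
    (C * P * (s₀ • (1 : Matrix (Fin ν) (Fin ν) ℂ) - F)⁻¹ * G * L) *ᵥ v =
      (C * (s₀ • (1 : Matrix (Fin n) (Fin n) ℂ) - A)⁻¹ * (B * L)) *ᵥ v := by
  have hId : F * 1 + G * L = 1 * S := by rw [hF]; noncomm_ring
  have hReduced := inv_smul_one_sub_mulVec_of_sylvester hId hSv hsF
  have hFull := inv_smul_one_sub_mulVec_of_sylvester hP hSv hsA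
  rw [one_mulVec] at hReduced
  calc (C * P * (s₀ • 1 - F)⁻¹ * G * L) *ᵥ v
      = (C * P) *ᵥ ((s₀ • 1 - F)⁻¹ *ᵥ ((G * L) *ᵥ v)) := by
        simp only [mulVec_mulVec, Matrix.mul_assoc]
    _ = C *ᵥ (P *ᵥ v) := by rw [hReduced, mulVec_mulVec]
    _ = (C * (s₀ • 1 - A)⁻¹ * (B * L)) *ᵥ v := by
        rw [← hFull, mulVec_mulVec, mulVec_mulVec, Matrix.mul_assoc]

/-- The two-sided reduced model matches the right interpolation data:
`Ŵ(s₀)Lv = C(s₀I − A)⁻¹BLv` whenever `Sv = s₀v`. -/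
theorem twosided_right_matching {n ν m p : ℕ}
    (A : Matrix (Fin n) (Fin n) ℂ) (B : Matrix (Fin n) (Fin m) ℂ)
    (C : Matrix (Fin p) (Fin n) ℂ) (S Q : Matrix (Fin ν) (Fin ν) ℂ)
    (L : Matrix (Fin m) (Fin ν) ℂ) (R : Matrix (Fin ν) (Fin p) ℂ)
    (P : Matrix (Fin n) (Fin ν) ℂ) (U : Matrix (Fin ν) (Fin n) ℂ)
    (hP : A * P + B * L = P * S) (hU : U * A + R * C = Q * U)
    (hInv : IsUnit (U * P))
    (G : Matrix (Fin ν) (Fin m) ℂ) (hG : G = (U * P)⁻¹ * (U * B))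
    (F : Matrix (Fin ν) (Fin ν) ℂ) (hF : F = S - G * L)
    (s₀ : ℂ) (hsA : s₀ ∉ spectrum ℂ A) (hsF : s₀ ∉ spectrum ℂ F)
    (v : Fin ν → ℂ) (hv : v ≠ 0) (hSv : S *ᵥ v = s₀ • v) :
    (C * P * (s₀ • (1 : Matrix (Fin ν) (Fin ν) ℂ) - F)⁻¹ * G * L) *ᵥ v =
      (C * (s₀ • (1 : Matrix (Fin n) (Fin n) ℂ) - A)⁻¹ * (B * L)) *ᵥ v :=
  twosided_right_matching_general A B C S L P hP G F hF s₀ hsA hsF v hSv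
end

section
/- Two-sided reduced model matches left interpolation data: under the same setup (G = (ΥΠ)^{-1}ΥB, F = S − GL, ΥΠ invertible), if q₀ is an eigenvalue of Q with left eigenvector w (wᵀQ = q₀wᵀ) and q₀ ∉ σ(A) ∪ σ(F), then wᵀR · CΠ(q₀I − F)^{-1}G = wᵀR · C(q₀I − A)^{-1}B. -/
open Matrix


lemma vecMul_smul_right' {k l : ℕ} (c : ℂ) (v : Fin k → ℂ) (X : Matrix (Fin k) (Fin l) ℂ) :
    v ᵥ* (c • X) = c • (v ᵥ* X) := by
  ext i
  simp [Matrix.vecMul, dotProduct, Finset.mul_sum, mul_left_comm]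

/-- The two-sided reduced model matches the left interpolation data:
`wᵀR·CΠ(q₀I − F)⁻¹G = wᵀR·C(q₀I − A)⁻¹B` whenever `wᵀQ = q₀wᵀ`. -/
theorem twosided_left_matching {n ν m p : ℕ}
    (A : Matrix (Fin n) (Fin n) ℂ) (B : Matrix (Fin n) (Fin m) ℂ)
    (C : Matrix (Fin p) (Fin n) ℂ) (S Q : Matrix (Fin ν) (Fin ν) ℂ)
    (L : Matrix (Fin m) (Fin ν) ℂ) (R : Matrix (Fin ν) (Fin p) ℂ)
    (P : Matrix (Fin n) (Fin ν) ℂ) (U : Matrix (Fin ν) (Fin n) ℂ)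
    (hP : A * P + B * L = P * S) (hU : U * A + R * C = Q * U)
    (hInv : IsUnit (U * P))
    (G : Matrix (Fin ν) (Fin m) ℂ) (hG : G = (U * P)⁻¹ * (U * B))
    (F : Matrix (Fin ν) (Fin ν) ℂ) (hF : F = S - G * L)
    (q₀ : ℂ) (hqA : q₀ ∉ spectrum ℂ A) (hqF : q₀ ∉ spectrum ℂ F)
    (w : Fin ν → ℂ) (hw : w ≠ 0) (hwQ : w ᵥ* Q = q₀ • w) :
    (w ᵥ* R) ᵥ* (C * P * (q₀ • (1 : Matrix (Fin ν) (Fin ν) ℂ) - F)⁻¹ * G) =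
      (w ᵥ* R) ᵥ* (C * (q₀ • (1 : Matrix (Fin n) (Fin n) ℂ) - A)⁻¹ * B) := by
  set M : Matrix (Fin ν) (Fin ν) ℂ := q₀ • (1 : Matrix (Fin ν) (Fin ν) ℂ) - F with hM
  set N : Matrix (Fin n) (Fin n) ℂ := q₀ • (1 : Matrix (Fin n) (Fin n) ℂ) - A with hN
  have hMu : IsUnit M := by
    rw [spectrum.notMem_iff] at hqF
    simpa [hM, Algebra.algebraMap_eq_smul_one] using hqF
  have hNu : IsUnit N := by
    rw [spectrum.notMem_iff] at hqA
    simpa [hN, Algebra.algebraMap_eq_smul_one] using hqA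
  have hMinv : M * M⁻¹ = 1 := Matrix.mul_nonsing_inv M ((Matrix.isUnit_iff_isUnit_det M).mp hMu)
  have hNinv : N * N⁻¹ = 1 := Matrix.mul_nonsing_inv N ((Matrix.isUnit_iff_isUnit_det N).mp hNu)
  have hUPG : U * P * G = U * B := by
    rw [hG, ← Matrix.mul_assoc, Matrix.mul_nonsing_inv _
      ((Matrix.isUnit_iff_isUnit_det _).mp hInv), Matrix.one_mul]
  have hKey : U * P * F + R * (C * P) = Q * (U * P) := by
    have h1 : U * P * F = U * A * P := by
      have hS : U * P * S = U * A * P + U * B * L := by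
        calc U * P * S = U * (P * S) := by rw [Matrix.mul_assoc]
        _ = U * (A * P + B * L) := by rw [hP]
        _ = U * A * P + U * B * L := by
            rw [Matrix.mul_add, ← Matrix.mul_assoc, ← Matrix.mul_assoc]
      rw [hF, Matrix.mul_sub, hS, ← Matrix.mul_assoc, hUPG]
      abel
    have h2 : R * (C * P) = (Q * U - U * A) * P := by
      have h3 : R * C = Q * U - U * A := by
        rw [← hU]; abel
      rw [← Matrix.mul_assoc, h3]
    rw [h1, h2, Matrix.sub_mul, ← Matrix.mul_assoc]
    abel
  have hwQ' : ∀ (X : Matrix (Fin ν) (Fin n) ℂ), w ᵥ* (Q * X) = q₀ • (w ᵥ* X) := fun X => by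
    rw [← Matrix.vecMul_vecMul, hwQ, Matrix.smul_vecMul]
  have hwQν : ∀ (X : Matrix (Fin ν) (Fin ν) ℂ), w ᵥ* (Q * X) = q₀ • (w ᵥ* X) := fun X => by
    rw [← Matrix.vecMul_vecMul, hwQ, Matrix.smul_vecMul]
  have hL1 : w ᵥ* (R * (C * P)) = (w ᵥ* (U * P)) ᵥ* M := by
    have h4 : R * (C * P) = Q * (U * P) - U * P * F := by
      rw [← hKey]; abel
    rw [h4, Matrix.vecMul_sub, hwQν, hM, Matrix.vecMul_vecMul, Matrix.mul_sub,
      Matrix.vecMul_sub]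
    congr 1
    rw [Matrix.mul_smul, Matrix.mul_one, vecMul_smul_right']
  have hL2 : w ᵥ* (R * C) = (w ᵥ* U) ᵥ* N := by
    have h5 : R * C = Q * U - U * A := by rw [← hU]; abel
    rw [h5, Matrix.vecMul_sub, hwQ', hN, Matrix.vecMul_vecMul, Matrix.mul_sub,
      Matrix.vecMul_sub]
    congr 1
    rw [Matrix.mul_smul, Matrix.mul_one, vecMul_smul_right']
  have e1 : (w ᵥ* R) ᵥ* (C * P * M⁻¹ * G) = ((w ᵥ* (R * (C * P))) ᵥ* M⁻¹) ᵥ* G := by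
    simp only [← Matrix.vecMul_vecMul, ← Matrix.mul_assoc]
  have e2 : (w ᵥ* R) ᵥ* (C * N⁻¹ * B) = ((w ᵥ* (R * C)) ᵥ* N⁻¹) ᵥ* B := by
    simp only [← Matrix.vecMul_vecMul, ← Matrix.mul_assoc]
  rw [e1, e2, hL1, hL2, Matrix.vecMul_vecMul (w ᵥ* (U * P)) M M⁻¹,
    Matrix.vecMul_vecMul (w ᵥ* U) N N⁻¹, hMinv, hNinv, Matrix.vecMul_one, Matrix.vecMul_one,
    Matrix.vecMul_vecMul, Matrix.vecMul_vecMul, hUPG]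
end
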